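/- Let A and B be Hom-finite k-linear categories admitting Serre functors S_A and S_B, and let F : A → B be a k-linear functor admitting a left adjoint L : B → A. Then S_A ∘ L ∘ S_B^{-1} is a right adjoint of F. -/

import Mathlib

open CategoryTheory

/-- A Serre functor on a Hom-finite `k`-linear category `C`: an autoequivalence `S`
together with pairings realising natural isomorphisms
`Hom(X, Y) ≅ Hom(Y, S X)^∨`, functorial in `X` and `Y`. -/
structure SerreFunctor (k : Type*) (C : Type*) [Field k] [Category C]
    [Preadditive C] [Linear k C] where
  S : C ⥤ C
  isEquiv : S.IsEquivalence
  η : ∀ X Y : C, (X ⟶ Y) →ₗ[k] ((Y ⟶ S.obj X) →ₗ[k] k)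
  η_bij : ∀ X Y : C, Function.Bijective (η X Y)
  nat : ∀ {X X' Y Y' : C} (a : X' ⟶ X) (b : Y ⟶ Y') (f : X ⟶ Y) (g : Y' ⟶ S.obj X'),
    η X' Y' (a ≫ f ≫ b) g = η X Y f (b ≫ g ≫ S.map a)

/-!
Serre duality in `B`, the adjunction `L ⊣ F` and Serre duality in `A` give the chain
`Hom(F X, Y) ≅ Hom(S_B⁻¹ Y, F X)^∨ ≅ Hom(L S_B⁻¹ Y, X)^∨ ≅ Hom(X, S_A L S_B⁻¹ Y)`.
Hom-finiteness makes the Serre pairings perfect, so a morphism into `S_A (L S_B⁻¹ Y)` is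
determined by its pairings; naturality of the chain is therefore checked after pairing, where
it reduces to the naturality of the Serre pairings and of the adjunction.
-/

open Module

namespace SerreFunctor

variable {k C : Type*} [Field k] [Category C] [Preadditive C] [Linear k C]
  (S : SerreFunctor k C)

instance isPerfPair [∀ X Y : C, FiniteDimensional k (X ⟶ Y)] (X Y : C) :
    (S.η X Y).IsPerfPair :=
  .of_bijective _ (S.η_bij X Y)

lemma η_comp {X Y Y' : C} (f : X ⟶ Y) (b : Y ⟶ Y') (g : Y' ⟶ S.S.obj X) :
    S.η X Y' (f ≫ b) g = S.η X Y f (b ≫ g) := by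
  simpa using S.nat (𝟙 X) b f g

lemma η_comp_map {X' X Y : C} (a : X' ⟶ X) (f : X ⟶ Y) (g : Y ⟶ S.S.obj X') :
    S.η X' Y (a ≫ f) g = S.η X Y f (g ≫ S.S.map a) := by
  simpa using S.nat a (𝟙 Y) f g

lemma hom_ext_η [∀ X Y : C, FiniteDimensional k (X ⟶ Y)] {X Y : C} {g g' : Y ⟶ S.S.obj X}
    (h : ∀ f, S.η X Y f g = S.η X Y f g') : g = g' :=
  (S.η X Y).flip.toPerfPair.injective (LinearMap.ext h)

end SerreFunctor

namespace CategoryTheory.Adjunction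

section Linear

variable (k : Type*) [Semiring k] {C D : Type*} [Category C] [Category D]
  [Preadditive C] [Linear k C] [Preadditive D] [Linear k D]
  {F : C ⥤ D} [F.Additive] [F.Linear k] {G : D ⥤ C} (adj : G ⊣ F)

def homLinearEquiv (Y : D) (X : C) : (G.obj Y ⟶ X) ≃ₗ[k] (Y ⟶ F.obj X) where
  __ := adj.homEquiv Y X
  map_add' _ _ := by simp [homEquiv_unit]
  map_smul' _ _ := by simp [homEquiv_unit]

@[simp]
lemma homLinearEquiv_apply (Y : D) (X : C) (t : G.obj Y ⟶ X) :
    adj.homLinearEquiv k Y X t = adj.homEquiv Y X t := rfl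

end Linear

variable {k : Type*} [Field k] {A B : Type*} [Category A] [Category B]
  [Preadditive A] [Linear k A] [Preadditive B] [Linear k B]
  [∀ X Y : A, FiniteDimensional k (X ⟶ Y)] [∀ X Y : B, FiniteDimensional k (X ⟶ Y)]
  {F : A ⥤ B} [F.Additive] [F.Linear k] {L : B ⥤ A} (adj : L ⊣ F)
  (SA : SerreFunctor k A) (SB : SerreFunctor k B) {SBinv : B ⥤ B} (e : SBinv ⋙ SB.S ≅ 𝟭 B)

noncomputable def serreRightAdjointHomEquiv (X : A) (Y : B) :
    (F.obj X ⟶ Y) ≃ₗ[k] (X ⟶ SA.S.obj (L.obj (SBinv.obj Y))) :=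
  Linear.homCongr k (Iso.refl _) (e.app Y).symm ≪≫ₗ
    (SB.η (SBinv.obj Y) (F.obj X)).flip.toPerfPair ≪≫ₗ
    (adj.homLinearEquiv k (SBinv.obj Y) X).dualMap ≪≫ₗ
    (SA.η (L.obj (SBinv.obj Y)) X).flip.toPerfPair.symm

lemma η_serreRightAdjointHomEquiv {X : A} {Y : B} (u : F.obj X ⟶ Y)
    (t : L.obj (SBinv.obj Y) ⟶ X) :
    SA.η _ X t (adj.serreRightAdjointHomEquiv SA SB e X Y u) =
      SB.η _ _ (adj.homEquiv _ X t) (u ≫ e.inv.app Y) := by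
  simp [serreRightAdjointHomEquiv, Linear.homCongr]

lemma serreRightAdjointHomEquiv_map_comp {X' X : A} {Y : B} (f : X' ⟶ X) (u : F.obj X ⟶ Y) :
    adj.serreRightAdjointHomEquiv SA SB e X' Y (F.map f ≫ u) =
      f ≫ adj.serreRightAdjointHomEquiv SA SB e X Y u := by
  refine SA.hom_ext_η fun t => ?_
  rw [η_serreRightAdjointHomEquiv, Category.assoc, ← SB.η_comp,
    ← homEquiv_naturality_right, ← η_serreRightAdjointHomEquiv, SA.η_comp]

lemma serreRightAdjointHomEquiv_comp {X : A} {Y Y' : B} (u : F.obj X ⟶ Y) (g : Y ⟶ Y') :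
    adj.serreRightAdjointHomEquiv SA SB e X Y' (u ≫ g) =
      adj.serreRightAdjointHomEquiv SA SB e X Y u ≫ SA.S.map (L.map (SBinv.map g)) := by
  refine SA.hom_ext_η fun t => ?_
  have he : e.inv.app Y ≫ SB.S.map (SBinv.map g) = g ≫ e.inv.app Y' := (e.inv.naturality g).symm
  rw [← SA.η_comp_map, η_serreRightAdjointHomEquiv, η_serreRightAdjointHomEquiv,
    homEquiv_naturality_left, SB.η_comp_map]
  simp only [Category.assoc, he]

noncomputable def serreRightAdjoint : F ⊣ SBinv ⋙ L ⋙ SA.S :=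
  mkOfHomEquiv
    { homEquiv X Y := (adj.serreRightAdjointHomEquiv SA SB e X Y).toEquiv
      homEquiv_naturality_left_symm f g := (Equiv.symm_apply_eq _).mpr <| by
        simp only [LinearEquiv.coe_symm_toEquiv, LinearEquiv.coe_toEquiv,
          serreRightAdjointHomEquiv_map_comp, LinearEquiv.apply_symm_apply]
      homEquiv_naturality_right := serreRightAdjointHomEquiv_comp adj SA SB e }

end CategoryTheory.Adjunction

/-- If `A`, `B` are Hom-finite `k`-linear categories with Serre functors `S_A`, `S_B`
and `F : A ⥤ B` is a `k`-linear functor with left adjoint `L`, then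
`S_A ∘ L ∘ S_B⁻¹` is a right adjoint of `F`. -/
theorem stmt_8 (k : Type*) [Field k] {A B : Type*} [Category A] [Category B]
    [Preadditive A] [Linear k A] [Preadditive B] [Linear k B]
    [∀ X Y : A, FiniteDimensional k (X ⟶ Y)]
    [∀ X Y : B, FiniteDimensional k (X ⟶ Y)]
    (SA : SerreFunctor k A) (SB : SerreFunctor k B)
    (F : A ⥤ B) [F.Additive] [F.Linear k]
    (L : B ⥤ A) (adj : L ⊣ F)
    (SBinv : B ⥤ B) (e₁ : SB.S ⋙ SBinv ≅ 𝟭 B) (e₂ : SBinv ⋙ SB.S ≅ 𝟭 B) :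
    Nonempty (F ⊣ (SBinv ⋙ L ⋙ SA.S)) :=
  ⟨adj.serreRightAdjoint SA SB e₂⟩
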